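/- arXiv:2409.04767 — 2 statements merged into one kernel-verified Lean document; each statement's English description precedes it below -/
import Mathlib

section
/- Let B ∈ ℝ^{n×n} be a nonsingular M-matrix, i.e., all off-diagonal entries of B are less than or equal to zero and all principal minors of B are positive. Then there exists a positive definite diagonal matrix P ∈ ℝ^{n×n} such that PB + BᵀP is positive definite. -/
/-!
By induction on `n`, a Z-matrix `B` with positive principal minors has an entrywise nonnegative
inverse: the Schur complement of the leading `n × n` block is a `1 × 1` matrix with positive
determinant, and the block-inverse formula writes every block of `B⁻¹` as a product of
nonnegative matrices. Hence `x = B⁻¹ 1` and `y = B⁻ᵀ 1` are positive vectors.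

Put `C = diag(y) B diag(x)`. The symmetric Z-matrix `C + Cᵀ` has row sums `y + x > 0`, and a
symmetric Z-matrix `S` with positive row sums `r` is positive definite because
`wᵀ S w = ∑ rᵢ wᵢ² - ½ ∑ Sᵢⱼ (wᵢ - wⱼ)²`. Finally `P = diag(y / x)` satisfies
`P B + Bᵀ P = diag(x)⁻¹ (C + Cᵀ) diag(x)⁻¹`.
-/

open Matrix

namespace Matrix

variable {ι κ : Type*}

def IsZMatrix (B : Matrix ι ι ℝ) : Prop := ∀ i j, i ≠ j → B i j ≤ 0

def HasPosPrincipalMinors [DecidableEq ι] (B : Matrix ι ι ℝ) : Prop :=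
  ∀ S : Finset ι, 0 < (B.submatrix (fun a : {x // x ∈ S} => (a : ι))
    (fun a : {x // x ∈ S} => (a : ι))).det

namespace IsZMatrix

variable {B C : Matrix ι ι ℝ}

theorem transpose (hB : B.IsZMatrix) : Bᵀ.IsZMatrix := fun i j hij => hB j i hij.symm

theorem submatrix (hB : B.IsZMatrix) {f : κ → ι} (hf : f.Injective) :
    (B.submatrix f f).IsZMatrix :=
  fun i j hij => hB (f i) (f j) (hf.ne hij)

theorem add (hB : B.IsZMatrix) (hC : C.IsZMatrix) : (B + C).IsZMatrix :=
  fun i j hij => add_nonpos (hB i j hij) (hC i j hij)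

theorem diagonal_mul_mul_diagonal [Fintype ι] [DecidableEq ι] (hB : B.IsZMatrix)
    {x y : ι → ℝ} (hx : ∀ i, 0 ≤ x i) (hy : ∀ i, 0 ≤ y i) :
    (diagonal y * B * diagonal x).IsZMatrix := fun i j hij => by
  rw [mul_diagonal, diagonal_mul]
  exact mul_nonpos_of_nonpos_of_nonneg (mul_nonpos_of_nonneg_of_nonpos (hy i) (hB i j hij)) (hx j)

end IsZMatrix

namespace HasPosPrincipalMinors

variable [DecidableEq ι] {B : Matrix ι ι ℝ}

theorem det_pos [Fintype ι] (hB : B.HasPosPrincipalMinors) : 0 < B.det := by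
  rw [← det_submatrix_equiv_self (Equiv.subtypeUnivEquiv Finset.mem_univ)]
  exact hB Finset.univ

theorem transpose (hB : B.HasPosPrincipalMinors) : Bᵀ.HasPosPrincipalMinors := fun S => by
  simpa only [← transpose_submatrix, det_transpose] using hB S

theorem submatrix [DecidableEq κ] (hB : B.HasPosPrincipalMinors) {f : κ → ι}
    (hf : f.Injective) : (B.submatrix f f).HasPosPrincipalMinors := fun S => by
  have h := hB (S.map ⟨f, hf⟩)
  rwa [← det_submatrix_equiv_self (S.equivMap ⟨f, hf⟩)] at h

end HasPosPrincipalMinors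

section Nonneg

variable {l m n α : Type*} [Fintype m]

theorem mul_apply_nonneg [Semiring α] [PartialOrder α] [IsOrderedRing α] {M : Matrix l m α}
    {N : Matrix m n α} (hM : ∀ i j, 0 ≤ M i j) (hN : ∀ i j, 0 ≤ N i j) (i : l) (k : n) :
    0 ≤ (M * N) i k :=
  Finset.sum_nonneg fun j _ => mul_nonneg (hM i j) (hN j k)

theorem inv_fromBlocks_apply_nonneg [CommRing α] [PartialOrder α] [IsOrderedRing α]
    [DecidableEq m] [Fintype n] [DecidableEq n]
    {A : Matrix m m α} {b : Matrix m n α} {c : Matrix n m α} {d : Matrix n n α}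
    (hA : IsUnit A.det) (hs : IsUnit (d - c * A⁻¹ * b).det) (hA' : ∀ i j, 0 ≤ A⁻¹ i j)
    (hs' : ∀ i j, 0 ≤ (d - c * A⁻¹ * b)⁻¹ i j) (hb : ∀ i j, b i j ≤ 0) (hc : ∀ i j, c i j ≤ 0) :
    ∀ i j, 0 ≤ (fromBlocks A b c d)⁻¹ i j := by
  let := A.invertibleOfIsUnitDet hA
  let := (d - c * ⅟A * b).invertibleOfIsUnitDet (by rwa [invOf_eq_nonsing_inv])
  let := fromBlocks₁₁Invertible A b c d
  have hb' : ∀ i j, 0 ≤ (-b) i j := fun i j => neg_nonneg.2 (hb i j)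
  have hc' : ∀ i j, 0 ≤ (-c) i j := fun i j => neg_nonneg.2 (hc i j)
  rw [← invOf_eq_nonsing_inv, invOf_fromBlocks₁₁_eq]
  simp only [invOf_eq_nonsing_inv]
  set s := d - c * A⁻¹ * b
  rintro (i | i) (j | j)
  · rw [fromBlocks_apply₁₁, add_apply,
      show A⁻¹ * b * s⁻¹ * c * A⁻¹ = A⁻¹ * -b * s⁻¹ * -c * A⁻¹ by
        simp only [Matrix.mul_neg, Matrix.neg_mul, neg_neg]]
    exact add_nonneg (hA' i j) (mul_apply_nonneg
      (mul_apply_nonneg (mul_apply_nonneg (mul_apply_nonneg hA' hb') hs') hc') hA' i j)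
  · rw [fromBlocks_apply₁₂, ← Matrix.neg_mul, ← Matrix.mul_neg]
    exact mul_apply_nonneg (mul_apply_nonneg hA' hb') hs' i j
  · rw [fromBlocks_apply₂₁, ← Matrix.neg_mul, ← Matrix.mul_neg]
    exact mul_apply_nonneg (mul_apply_nonneg hs' hc') hA' i j
  · exact hs' i j

theorem inv_apply_nonneg_of_det_nonneg [Field α] [LinearOrder α] [IsStrictOrderedRing α]
    {s : Matrix (Fin 1) (Fin 1) α} (h : 0 ≤ s.det) : ∀ i j, 0 ≤ s⁻¹ i j := by
  rw [inv_def, adjugate_fin_one, Ring.inverse_eq_inv']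
  intro i j
  fin_cases i; fin_cases j
  simpa using h

end Nonneg

theorem IsZMatrix.inv_apply_nonneg :
    ∀ {n : ℕ} {B : Matrix (Fin n) (Fin n) ℝ}, B.IsZMatrix → B.HasPosPrincipalMinors →
      ∀ i j, 0 ≤ B⁻¹ i j
  | 0, _, _, _ => fun i => i.elim0
  | n + 1, B, hZ, hM => by
    let e : Fin n ⊕ Fin 1 ≃ Fin (n + 1) := finSumFinEquiv
    set C := B.submatrix e e
    suffices ∀ i j, 0 ≤ C⁻¹ i j by
      intro i j
      simpa [C, inv_submatrix_equiv] using this (e.symm i) (e.symm j)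
    have hZC := hZ.submatrix e.injective
    have hMC := hM.submatrix e.injective
    have hA := hMC.submatrix Sum.inl_injective
    have hAdet : 0 < C.toBlocks₁₁.det := hA.det_pos
    have hsdet : 0 < (C.toBlocks₂₂ - C.toBlocks₂₁ * C.toBlocks₁₁⁻¹ * C.toBlocks₁₂).det := by
      let := C.toBlocks₁₁.invertibleOfIsUnitDet hAdet.ne'.isUnit
      have h := det_fromBlocks₁₁ C.toBlocks₁₁ C.toBlocks₁₂ C.toBlocks₂₁ C.toBlocks₂₂
      rw [fromBlocks_toBlocks, invOf_eq_nonsing_inv] at h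
      exact pos_of_mul_pos_right (h ▸ hMC.det_pos) hAdet.le
    rw [← fromBlocks_toBlocks C]
    exact inv_fromBlocks_apply_nonneg hAdet.ne'.isUnit hsdet.ne'.isUnit
      ((hZC.submatrix Sum.inl_injective).inv_apply_nonneg hA)
      (inv_apply_nonneg_of_det_nonneg hsdet.le)
      (fun _ _ => hZC _ _ Sum.inl_ne_inr) (fun _ _ => hZC _ _ Sum.inr_ne_inl)

theorem mulVec_pos_of_apply_nonneg [Fintype ι] [DecidableEq ι] {M : Matrix ι ι ℝ} (hM : IsUnit M)
    (hM' : ∀ i j, 0 ≤ M i j) {v : ι → ℝ} (hv : ∀ i, 0 < v i) (i : ι) : 0 < (M *ᵥ v) i := by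
  refine (Finset.sum_nonneg fun j _ => mul_nonneg (hM' i j) (hv j).le).lt_of_ne fun h => ?_
  have hrow : ∀ j, M i j = 0 := fun j =>
    (mul_eq_zero.1 ((Finset.sum_eq_zero_iff_of_nonneg fun j _ =>
      mul_nonneg (hM' i j) (hv j).le).1 h.symm j (Finset.mem_univ j))).resolve_right (hv j).ne'
  obtain ⟨N, hN⟩ := hM.exists_right_inv
  simpa [mul_apply, hrow] using congrFun (congrFun hN i) i

theorem IsZMatrix.exists_pos_mulVec_eq_one {n : ℕ} {B : Matrix (Fin n) (Fin n) ℝ}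
    (hZ : B.IsZMatrix) (hM : B.HasPosPrincipalMinors) : ∃ x, (∀ i, 0 < x i) ∧ B *ᵥ x = 1 := by
  have hB : IsUnit B.det := hM.det_pos.ne'.isUnit
  have hB' : IsUnit B⁻¹ := isUnit_nonsing_inv_iff.2 ((isUnit_iff_isUnit_det B).2 hB)
  refine ⟨B⁻¹ *ᵥ 1, mulVec_pos_of_apply_nonneg hB' (hZ.inv_apply_nonneg hM) fun _ => one_pos, ?_⟩
  rw [mulVec_mulVec, mul_nonsing_inv _ hB, one_mulVec]

theorem IsSymm.two_mul_dotProduct_mulVec_self [Fintype ι] {α : Type*} [CommRing α]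
    {S : Matrix ι ι α} (hS : S.IsSymm) (w : ι → α) :
    2 * (w ⬝ᵥ S *ᵥ w) = 2 * ∑ i, (S *ᵥ 1) i * w i ^ 2 - ∑ i, ∑ j, S i j * (w i - w j) ^ 2 := by
  have hswap : ∑ i, ∑ j, S i j * w j ^ 2 = ∑ i, ∑ j, S i j * w i ^ 2 := by
    rw [Finset.sum_comm]
    simp_rw [hS.apply]
  have hquad : w ⬝ᵥ S *ᵥ w = ∑ i, ∑ j, w i * (S i j * w j) := by
    simp only [dotProduct, mulVec, Finset.mul_sum]
  have hrow : ∀ i, (S *ᵥ 1) i = ∑ j, S i j := by simp [mulVec, dotProduct]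
  have hexpand : ∑ i, ∑ j, S i j * (w i - w j) ^ 2
      = ∑ i, ∑ j, S i j * w i ^ 2 + ∑ i, ∑ j, S i j * w j ^ 2
        - 2 * ∑ i, ∑ j, w i * (S i j * w j) := by
    simp only [Finset.mul_sum, ← Finset.sum_add_distrib, ← Finset.sum_sub_distrib]
    refine Finset.sum_congr rfl fun i _ => Finset.sum_congr rfl fun j _ => ?_
    ring
  simp only [hexpand, hswap, hquad, hrow, Finset.sum_mul]
  ring

theorem IsZMatrix.posDef_of_mulVec_one_pos [Fintype ι] {S : Matrix ι ι ℝ} (hZ : S.IsZMatrix)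
    (hS : S.IsSymm) (h1 : ∀ i, 0 < (S *ᵥ 1) i) : S.PosDef := by
  refine PosDef.of_dotProduct_mulVec_pos (isHermitian_iff_isSymm.2 hS) fun w hw => ?_
  have hdiff : ∑ i, ∑ j, S i j * (w i - w j) ^ 2 ≤ 0 := by
    refine Finset.sum_nonpos fun i _ => Finset.sum_nonpos fun j _ => ?_
    rcases eq_or_ne i j with rfl | hij
    · simp
    · exact mul_nonpos_of_nonpos_of_nonneg (hZ i j hij) (sq_nonneg _)
  have hpos : 0 < ∑ i, (S *ᵥ 1) i * w i ^ 2 := by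
    obtain ⟨k, hk⟩ := Function.ne_iff.1 hw
    exact Finset.sum_pos' (fun i _ => mul_nonneg (h1 i).le (sq_nonneg _))
      ⟨k, Finset.mem_univ k, mul_pos (h1 k) (pow_two_pos_of_ne_zero hk)⟩
  rw [star_trivial]
  linarith [hS.two_mul_dotProduct_mulVec_self w]

end Matrix

/-- If `B` is a nonsingular M-matrix (off-diagonal entries `≤ 0`, all principal minors
positive), then there exists a positive definite diagonal matrix `P` such that
`PB + BᵀP` is positive definite. -/
theorem stmt_1 (n : ℕ) (B : Matrix (Fin n) (Fin n) ℝ)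
    (hoff : ∀ i j : Fin n, i ≠ j → B i j ≤ 0)
    (hminor : ∀ S : Finset (Fin n),
      0 < (B.submatrix (fun a : {x // x ∈ S} => (a : Fin n))
        (fun a : {x // x ∈ S} => (a : Fin n))).det) :
    ∃ d : Fin n → ℝ, (∀ i, 0 < d i) ∧
      (Matrix.diagonal d * B + Bᵀ * Matrix.diagonal d).PosDef := by
  have hZ : B.IsZMatrix := hoff
  have hM : B.HasPosPrincipalMinors := hminor
  obtain ⟨x, hx, hBx⟩ := hZ.exists_pos_mulVec_eq_one hM
  obtain ⟨y, hy, hBy⟩ := hZ.transpose.exists_pos_mulVec_eq_one hM.transpose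
  set C := diagonal y * B * diagonal x
  have hC1 : (C + Cᵀ) *ᵥ 1 = y + x := by
    have hdiag : ∀ v : Fin n → ℝ, diagonal v *ᵥ 1 = v := fun v => funext fun i => by
      simp [mulVec_diagonal]
    rw [add_mulVec, transpose_mul, transpose_mul, diagonal_transpose, diagonal_transpose]
    simp only [C, ← mulVec_mulVec, hdiag, hBx, hBy]
  have hCZ : C.IsZMatrix := hZ.diagonal_mul_mul_diagonal (fun i => (hx i).le) (fun i => (hy i).le)
  have hS : (C + Cᵀ).PosDef := (hCZ.add hCZ.transpose).posDef_of_mulVec_one_pos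
    (isSymm_add_transpose_self C) fun i => by simpa [hC1] using add_pos (hy i) (hx i)
  have hU : IsUnit (diagonal x⁻¹) :=
    isUnit_diagonal.2 (Pi.isUnit_iff.2 fun i => by simpa using (hx i).ne')
  refine ⟨fun i => y i / x i, fun i => div_pos (hy i) (hx i), ?_⟩
  convert hU.posDef_star_left_conjugate_iff.2 hS using 1
  ext i j
  simp only [C, Matrix.add_apply, diagonal_mul, mul_diagonal, transpose_apply,
    star_eq_conjTranspose, conjTranspose_eq_transpose_of_trivial, diagonal_transpose,
    transpose_mul, Matrix.mul_add, Pi.inv_apply]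
  field_simp [(hx i).ne', (hx j).ne']
end

section
/- Let c > 0 and φ̲ > 0, and define φ : (0,∞) → ℝ by φ(t) = (1/t)e^{−ct} + φ̲. Then φ(t) > φ̲ for all t > 0, φ is strictly decreasing, φ(t) → ∞ as t → 0⁺, φ(t) → φ̲ as t → ∞, and the function t ↦ φ′(t)/φ(t)³ is bounded on (0,∞). -/
/-!
Write `f t = e^{-ct}/t`, so `φ = f + φ̲` and `φ' = -f (1/t + c)`. The only nontrivial claim is the
bound on `φ'/φ³`. Near `0` the term `1/t` is controlled by `f` itself (`e^{-ct} ≥ e^{-c}` for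
`t ≤ 1`), and away from `0` it is at most `1`; hence `1/t ≤ 1 + e^c f` on all of `(0,∞)`, and
`|φ'| ≤ (1 + c) f + e^c f²`. Dividing by `(f + φ̲)³` gives the uniform bound
`(1 + c)/φ̲² + e^c/φ̲`.
-/

open Filter Topology Real Set

lemma strictAntiOn_one_div_mul_exp {c : ℝ} (hc : 0 ≤ c) :
    StrictAntiOn (fun t : ℝ => (1 / t) * exp (-c * t)) (Ioi 0) := by
  intro x hx y hy hxy
  have hinv : 1 / y < 1 / x := one_div_lt_one_div_of_lt hx hxy
  have hexp : exp (-c * y) ≤ exp (-c * x) := exp_le_exp.mpr (by nlinarith)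
  exact mul_lt_mul hinv hexp (exp_pos _) (by simpa using hx.le)

lemma tendsto_one_div_mul_exp_nhdsGT_zero (c : ℝ) :
    Tendsto (fun t : ℝ => (1 / t) * exp (-c * t)) (𝓝[>] 0) atTop := by
  have hexp : Tendsto (fun t : ℝ => exp (-c * t)) (𝓝[>] 0) (𝓝 1) :=
    ((continuous_const.mul continuous_id).rexp.tendsto' 0 1 (by simp)).mono_left
      nhdsWithin_le_nhds
  simpa only [one_div] using tendsto_inv_nhdsGT_zero.atTop_mul_pos one_pos hexp

lemma tendsto_one_div_mul_exp_atTop {c : ℝ} (hc : 0 ≤ c) :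
    Tendsto (fun t : ℝ => (1 / t) * exp (-c * t)) atTop (𝓝 0) := by
  have hinv : Tendsto (fun t : ℝ => 1 / t) atTop (𝓝 0) := by
    simpa only [one_div] using tendsto_inv_atTop_zero
  refine tendsto_of_tendsto_of_tendsto_of_le_of_le' tendsto_const_nhds hinv ?_ ?_ <;>
    filter_upwards [eventually_gt_atTop 0] with t ht
  · positivity
  · exact mul_le_of_le_one_right (by positivity) (exp_le_one_iff.mpr (by nlinarith))

lemma hasDerivAt_one_div_mul_exp (c : ℝ) {t : ℝ} (ht : t ≠ 0) :
    HasDerivAt (fun t : ℝ => (1 / t) * exp (-c * t))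
      (-((1 / t) * exp (-c * t)) * (1 / t + c)) t := by
  have hinv : HasDerivAt (fun t : ℝ => 1 / t) (-(1 / t ^ 2)) t := by
    simpa only [one_div] using hasDerivAt_inv ht
  have hexp : HasDerivAt (fun t : ℝ => exp (-c * t)) (exp (-c * t) * (-c * 1)) t :=
    ((hasDerivAt_id t).const_mul (-c)).exp
  refine (hinv.mul hexp).congr_deriv ?_
  field_simp
  ring

lemma one_div_le_one_add_exp_mul {c t : ℝ} (hc : 0 ≤ c) (ht : 0 < t) :
    1 / t ≤ 1 + exp c * ((1 / t) * exp (-c * t)) := by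
  have hf : 0 ≤ exp c * ((1 / t) * exp (-c * t)) := by positivity
  rcases le_total t 1 with ht1 | ht1
  · have h : 1 ≤ exp c * exp (-c * t) := by
      rw [← exp_add]
      exact one_le_exp (by nlinarith)
    calc 1 / t ≤ exp c * ((1 / t) * exp (-c * t)) := by
          rw [mul_left_comm]
          exact le_mul_of_one_le_right (by positivity) h
      _ ≤ 1 + exp c * ((1 / t) * exp (-c * t)) := by linarith
  · linarith [(div_le_one ht).mpr ht1]

lemma mul_add_mul_sq_div_add_pow_three_le {a b x L : ℝ} (ha : 0 ≤ a) (hb : 0 ≤ b) (hx : 0 ≤ x)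
    (hL : 0 < L) : (a * x + b * x ^ 2) / (x + L) ^ 3 ≤ a / L ^ 2 + b / L := by
  have hxL : L ≤ x + L := le_add_of_nonneg_left hx
  have h1 : x / (x + L) ^ 3 ≤ 1 / L ^ 2 := by
    rw [div_le_div_iff₀ (by positivity) (by positivity)]
    nlinarith [pow_le_pow_left₀ hL.le hxL 2, sq_nonneg (x + L)]
  have h2 : x ^ 2 / (x + L) ^ 3 ≤ 1 / L := by
    rw [div_le_div_iff₀ (by positivity) hL]
    nlinarith [pow_le_pow_left₀ hx (le_add_of_nonneg_right hL.le) 2, sq_nonneg (x + L), sq_nonneg x]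
  calc (a * x + b * x ^ 2) / (x + L) ^ 3 = a * (x / (x + L) ^ 3) + b * (x ^ 2 / (x + L) ^ 3) := by
        ring
    _ ≤ a * (1 / L ^ 2) + b * (1 / L) := by gcongr
    _ = a / L ^ 2 + b / L := by ring

/-- For `c > 0` and `φ̲ > 0`, the funnel function `φ(t) = (1/t)e^{-ct} + φ̲` satisfies
`φ(t) > φ̲` on `(0,∞)`, is strictly decreasing there, tends to `∞` as `t → 0⁺`, tends to
`φ̲` as `t → ∞`, and `φ′/φ³` is bounded on `(0,∞)`. -/
theorem stmt_14 (c φlow : ℝ) (hc : 0 < c) (hφlow : 0 < φlow) :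
    (∀ t > (0 : ℝ), φlow < (1 / t) * Real.exp (-c * t) + φlow) ∧
    StrictAntiOn (fun t : ℝ => (1 / t) * Real.exp (-c * t) + φlow) (Set.Ioi 0) ∧
    Tendsto (fun t : ℝ => (1 / t) * Real.exp (-c * t) + φlow)
      (nhdsWithin 0 (Set.Ioi 0)) atTop ∧
    Tendsto (fun t : ℝ => (1 / t) * Real.exp (-c * t) + φlow) atTop (nhds φlow) ∧
    ∃ M : ℝ, ∀ t > (0 : ℝ),
      |deriv (fun t : ℝ => (1 / t) * Real.exp (-c * t) + φlow) t /
        ((1 / t) * Real.exp (-c * t) + φlow) ^ 3| ≤ M := by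
  refine ⟨fun t ht => lt_add_of_pos_left _ (by positivity),
    (strictAntiOn_one_div_mul_exp hc.le).add_const φlow,
    tendsto_atTop_add_const_right _ φlow (tendsto_one_div_mul_exp_nhdsGT_zero c),
    by simpa using (tendsto_one_div_mul_exp_atTop hc.le).add_const φlow,
    (1 + c) / φlow ^ 2 + exp c / φlow, fun t ht => ?_⟩
  set f := (1 / t) * exp (-c * t)
  have hf : 0 < f := by positivity
  rw [((hasDerivAt_one_div_mul_exp c ht.ne').add_const φlow).deriv, abs_div, abs_mul, abs_neg,
    abs_of_pos hf, abs_of_pos (by positivity : (0 : ℝ) < 1 / t + c),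
    abs_of_pos (by positivity : 0 < (f + φlow) ^ 3)]
  calc f * (1 / t + c) / (f + φlow) ^ 3
      ≤ ((1 + c) * f + exp c * f ^ 2) / (f + φlow) ^ 3 := by
        gcongr
        nlinarith [one_div_le_one_add_exp_mul hc.le ht]
    _ ≤ (1 + c) / φlow ^ 2 + exp c / φlow :=
        mul_add_mul_sq_div_add_pow_three_le (by positivity) (exp_pos c).le hf.le hφlow
end
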